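/- There exists a positive semidefinite 16×16 complex matrix B such that W[1,1,0,1] = B^Γ + 2·P₁ + 2·P₂, where B^Γ is the partial transpose of B with respect to the second tensor factor, and P₁, P₂ are the rank-one projectors onto the vectors Ψ₁ = (e₀⊗e₀ − e₂⊗e₂)/√2 and Ψ₂ = (e₁⊗e₁ − e₃⊗e₃)/√2. In particular, the witness W_II(0) = W[1,1,0,1] is decomposable. -/

import Mathlib

open Matrix Complex Real

/-- The tensor (product) vector `x ⊗ y` in `ℂ¹⁶`. -/
noncomputable def tensorVec (x y : Fin 4 → ℂ) : Fin 4 × Fin 4 → ℂ :=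
  fun p => x p.1 * y p.2

/-- The expectation `⟨v, W v⟩ = ∑ i, conj (v i) * (W *ᵥ v) i`. -/
noncomputable def expec (W : Matrix (Fin 4 × Fin 4) (Fin 4 × Fin 4) ℂ)
    (v : Fin 4 × Fin 4 → ℂ) : ℂ :=
  ∑ i, star (v i) * W.mulVec v i

/-- The Bell-diagonal matrix `W[a,b,c,d]` with `(α₀,α₁,α₂,α₃) = (a,b,c,d)`:
`W((k,m),(k',m')) = α_{(m−k) mod 4}` if `k=k', m=m'`; `−1` if `k=m, k'=m', k≠k'`;
`0` otherwise. -/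
noncomputable def Wabcd (a b c d : ℝ) : Matrix (Fin 4 × Fin 4) (Fin 4 × Fin 4) ℂ :=
  fun p q =>
    if p.1 = q.1 ∧ p.2 = q.2 then ((![a, b, c, d] (p.2 - p.1) : ℝ) : ℂ)
    else if p.1 = p.2 ∧ q.1 = q.2 ∧ p.1 ≠ q.1 then -1
    else 0

/-- The class-I witness `W_I(θ)`. -/
noncomputable def WI (θ : ℝ) : Matrix (Fin 4 × Fin 4) (Fin 4 × Fin 4) ℂ :=
  Wabcd ((2 - Real.sin θ) / 2) ((1 + Real.cos θ) / 2)
        (2 - (2 - Real.sin θ) / 2) (1 - (1 + Real.cos θ) / 2)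

/-- The class-II witness `W_II(θ)`. -/
noncomputable def WII (θ : ℝ) : Matrix (Fin 4 × Fin 4) (Fin 4 × Fin 4) ℂ :=
  Wabcd ((1 + Real.cos θ) / 2) ((2 - Real.sin θ) / 2)
        (1 - (1 + Real.cos θ) / 2) (2 - (2 - Real.sin θ) / 2)

/-- The maximally entangled vector `Ψ(j,j') = (−1)^{j+1}/2` if `j = j'`, else `0`. -/
noncomputable def PsiVec : Fin 4 × Fin 4 → ℂ :=
  fun p => if p.1 = p.2 then ((-1 : ℂ) ^ ((p.1 : ℕ) + 1)) / 2 else 0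

/-- The rank-one projector `P = |Ψ⟩⟨Ψ|`. -/
noncomputable def Pmat : Matrix (Fin 4 × Fin 4) (Fin 4 × Fin 4) ℂ :=
  fun u v => PsiVec u * star (PsiVec v)

open scoped ComplexOrder

/-- Partial transpose with respect to the second tensor factor:
`X^Γ((i,j),(k,l)) = X((i,l),(k,j))`. -/
noncomputable def partialTransposeSnd (X : Matrix (Fin 4 × Fin 4) (Fin 4 × Fin 4) ℂ) :
    Matrix (Fin 4 × Fin 4) (Fin 4 × Fin 4) ℂ :=
  fun p q => X (p.1, q.2) (q.1, p.2)

/-- `Ψ₁ = (|0⊗0⟩ − |2⊗2⟩)/√2`. -/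
noncomputable def Psi1 : Fin 4 × Fin 4 → ℂ :=
  fun p => if p = ((0 : Fin 4), (0 : Fin 4)) then (1 : ℂ) / Real.sqrt 2
    else if p = ((2 : Fin 4), (2 : Fin 4)) then -(1 : ℂ) / Real.sqrt 2 else 0

/-- `Ψ₂ = (|1⊗1⟩ − |3⊗3⟩)/√2`. -/
noncomputable def Psi2 : Fin 4 × Fin 4 → ℂ :=
  fun p => if p = ((1 : Fin 4), (1 : Fin 4)) then (1 : ℂ) / Real.sqrt 2
    else if p = ((3 : Fin 4), (3 : Fin 4)) then -(1 : ℂ) / Real.sqrt 2 else 0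

/-- `P₁ = |Ψ₁⟩⟨Ψ₁|`. -/
noncomputable def P1 : Matrix (Fin 4 × Fin 4) (Fin 4 × Fin 4) ℂ :=
  fun u v => Psi1 u * star (Psi1 v)

/-- `P₂ = |Ψ₂⟩⟨Ψ₂|`. -/
noncomputable def P2 : Matrix (Fin 4 × Fin 4) (Fin 4 × Fin 4) ℂ :=
  fun u v => Psi2 u * star (Psi2 v)

/-
Subtracting `2P₁ + 2P₂` from `W[1,1,0,1]` clears the diagonal entries at `(k,k)` and the
couplings between `(k,k)` and `(k+2,k+2)`. What is left is the partial transpose of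
`∑ₖ |e_k ⊗ e_{k+1} − e_{k+1} ⊗ e_k⟩⟨e_k ⊗ e_{k+1} − e_{k+1} ⊗ e_k|`, a sum of rank-one
positive matrices.
-/

def basisDiff {ι : Type*} [DecidableEq ι] (p q : ι) : ι → ℂ :=
  Pi.single p 1 - Pi.single q 1

noncomputable def cycleWitness : Matrix (Fin 4 × Fin 4) (Fin 4 × Fin 4) ℂ :=
  ∑ i : Fin 4, vecMulVec (basisDiff (i, i + 1) (i + 1, i)) (star (basisDiff (i, i + 1) (i + 1, i)))

lemma cycleWitness_posSemidef : cycleWitness.PosSemidef :=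
  posSemidef_iff_eq_sum_vecMulVec.mpr ⟨4, _, rfl⟩

lemma two_smul_vecMulVec_inv_sqrt_two_smul {n : Type*} (v : n → ℂ) :
    (2 : ℂ) • vecMulVec ((√2 : ℂ)⁻¹ • v) (star ((√2 : ℂ)⁻¹ • v)) = vecMulVec v (star v) := by
  have h : (2 : ℂ) * (√2 : ℂ)⁻¹ * star (√2 : ℂ)⁻¹ = 1 := by
    rw [star_inv₀, Complex.star_def, conj_ofReal, mul_assoc, ← mul_inv, ← ofReal_mul,
      Real.mul_self_sqrt zero_le_two]
    norm_num
  rw [star_smul, smul_vecMulVec, vecMulVec_smul, smul_smul, smul_smul, h, one_smul]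

lemma inv_sqrt_two_smul_basisDiff_eq_Psi1 : (√2 : ℂ)⁻¹ • basisDiff (0, 0) (2, 2) = Psi1 := by
  ext p
  simp only [Psi1, basisDiff, Pi.smul_apply, Pi.sub_apply, Pi.single_apply]
  split_ifs <;> simp_all [neg_div]

lemma inv_sqrt_two_smul_basisDiff_eq_Psi2 : (√2 : ℂ)⁻¹ • basisDiff (1, 1) (3, 3) = Psi2 := by
  ext p
  simp only [Psi2, basisDiff, Pi.smul_apply, Pi.sub_apply, Pi.single_apply]
  split_ifs <;> simp_all [neg_div]

lemma two_smul_P1 :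
    (2 : ℂ) • P1 = vecMulVec (basisDiff (0, 0) (2, 2)) (star (basisDiff (0, 0) (2, 2))) := by
  rw [← two_smul_vecMulVec_inv_sqrt_two_smul, inv_sqrt_two_smul_basisDiff_eq_Psi1]
  rfl

lemma two_smul_P2 :
    (2 : ℂ) • P2 = vecMulVec (basisDiff (1, 1) (3, 3)) (star (basisDiff (1, 1) (3, 3))) := by
  rw [← two_smul_vecMulVec_inv_sqrt_two_smul, inv_sqrt_two_smul_basisDiff_eq_Psi2]
  rfl

lemma Wabcd_one_one_zero_one_eq :
    Wabcd 1 1 0 1 = partialTransposeSnd cycleWitness +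
      vecMulVec (basisDiff (0, 0) (2, 2)) (star (basisDiff (0, 0) (2, 2))) +
      vecMulVec (basisDiff (1, 1) (3, 3)) (star (basisDiff (1, 1) (3, 3))) := by
  ext ⟨i, j⟩ ⟨k, l⟩
  simp only [Wabcd, partialTransposeSnd, cycleWitness, basisDiff, Matrix.add_apply,
    Fin.sum_univ_four, vecMulVec_apply, Pi.sub_apply, Pi.star_apply, Pi.single_apply,
    Prod.mk.injEq, star_sub, apply_ite star, star_one, star_zero]
  fin_cases i <;> fin_cases j <;> fin_cases k <;> fin_cases l <;> simp +decide

theorem W1101_decomposable :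
    ∃ B : Matrix (Fin 4 × Fin 4) (Fin 4 × Fin 4) ℂ,
      B.PosSemidef ∧
        Wabcd 1 1 0 1 = partialTransposeSnd B + (2 : ℂ) • P1 + (2 : ℂ) • P2 := by
  refine ⟨cycleWitness, cycleWitness_posSemidef, ?_⟩
  rw [two_smul_P1, two_smul_P2]
  exact Wabcd_one_one_zero_one_eq
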